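/- Let C = γ ∘ σ where σ : I → J is Cⁿ with σ' > 0 and γ : J → ℝⁿ is n-times differentiable. Then det(C'(t),…,C⁽ⁿ⁾(t)) = σ'(t)^(n(n+1)/2) · det(γ'(σ(t)),…,γ⁽ⁿ⁾(σ(t))). -/

import Mathlib

noncomputable def frameD (n : ℕ) (C : ℝ → Fin n → ℝ) (t : ℝ) : Matrix (Fin n) (Fin n) ℝ :=
  Matrix.of fun i j => iteratedDeriv (j.1 + 1) C t i

/-!
Each derivative of `γ ∘ σ` is, by the product and chain rules, a combination
`(γ ∘ σ)⁽ᵐ⁾ = ∑_{k ≤ m} q_{m,k} • γ⁽ᵏ⁾ ∘ σ` with leading coefficient `q_{m,m} = σ'ᵐ` and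
`q_{m,0} = 0` for `m ≥ 1`. Hence the frame of `γ ∘ σ` is the frame of `γ` at `σ t` times an
upper triangular matrix with diagonal `σ', σ'², …, σ'ⁿ`, whose determinant is `σ'^(n(n+1)/2)`.
-/

open Finset

/-- `(γ ∘ σ)⁽ᵐ⁾ = ∑ₖ reparamCoeff σ m k • γ⁽ᵏ⁾ ∘ σ`; the recursion is the product and chain rule
applied to one more derivative. -/
noncomputable def reparamCoeff (σ : ℝ → ℝ) : ℕ → ℕ → ℝ → ℝ
  | 0, 0 => fun _ => 1
  | 0, _ + 1 => fun _ => 0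
  | m + 1, 0 => deriv (reparamCoeff σ m 0)
  | m + 1, k + 1 => fun t => deriv (reparamCoeff σ m (k + 1)) t + deriv σ t * reparamCoeff σ m k t

namespace reparamCoeff

variable (σ : ℝ → ℝ)

theorem eq_zero_of_lt {m k : ℕ} (h : m < k) : reparamCoeff σ m k = 0 := by
  induction m generalizing k with
  | zero => obtain ⟨k, rfl⟩ := Nat.exists_eq_add_one_of_ne_zero (by omega : k ≠ 0); rfl
  | succ m ih =>
    obtain ⟨k, rfl⟩ := Nat.exists_eq_add_one_of_ne_zero (by omega : k ≠ 0)
    funext t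
    simp [reparamCoeff, ih (by omega : m < k + 1), ih (by omega : m < k)]

theorem succ_zero (m : ℕ) : reparamCoeff σ (m + 1) 0 = 0 := by
  induction m with
  | zero => funext t; simp [reparamCoeff]
  | succ m ih => rw [reparamCoeff, ih]; funext t; simp

theorem self (m : ℕ) : reparamCoeff σ m m = fun t => deriv σ t ^ m := by
  induction m with
  | zero => funext t; simp [reparamCoeff]
  | succ m ih =>
    funext t
    simp [reparamCoeff, eq_zero_of_lt σ (Nat.lt_succ_self m), ih, pow_succ, mul_comm]

theorem contDiff {n : ℕ} (hσ : ContDiff ℝ n σ) {m : ℕ} (hm : m ≤ n) (k : ℕ) :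
    ContDiff ℝ (n - m : ℕ) (reparamCoeff σ m k) := by
  induction m generalizing k with
  | zero => cases k <;> exact contDiff_const
  | succ m ih =>
    have hcast : ((n - m : ℕ) : WithTop ℕ∞) = (n - (m + 1) : ℕ) + 1 := by
      rw [show n - m = n - (m + 1) + 1 by omega]; push_cast; rfl
    have hderiv (j : ℕ) : ContDiff ℝ (n - (m + 1) : ℕ) (deriv (reparamCoeff σ m j)) := by
      have := ih (by omega) j
      rw [hcast, contDiff_succ_iff_deriv] at this
      exact this.2.2
    have hσ' : ContDiff ℝ (n - (m + 1) : ℕ) (deriv σ) := by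
      have : ContDiff ℝ ((n - (m + 1) : ℕ) + 1) σ :=
        hσ.of_le (by rw [← hcast]; exact_mod_cast Nat.sub_le n m)
      exact (contDiff_succ_iff_deriv.mp this).2.2
    cases k with
    | zero => exact hderiv 0
    | succ k =>
      exact (hderiv (k + 1)).add
        (hσ'.mul ((ih (by omega) k).of_le (by exact_mod_cast Nat.sub_le_sub_left (by omega) n)))

end reparamCoeff

section
variable {F : Type*} [NormedAddCommGroup F] [NormedSpace ℝ F]

theorem reparamCoeff.sum_succ_smul (σ : ℝ → ℝ) (m : ℕ) (t : ℝ) (v : ℕ → F) :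
    ∑ k ∈ range (m + 2), reparamCoeff σ (m + 1) k t • v k =
      ∑ k ∈ range (m + 1),
        (reparamCoeff σ m k t • deriv σ t • v (k + 1) + deriv (reparamCoeff σ m k) t • v k) := by
  have htop : deriv (reparamCoeff σ m (m + 1)) t = 0 := by
    simp [reparamCoeff.eq_zero_of_lt σ (Nat.lt_succ_self m)]
  rw [sum_range_succ' _ (m + 1)]
  simp only [reparamCoeff, add_smul, sum_add_distrib]
  rw [sum_range_succ (fun k => deriv (reparamCoeff σ m (k + 1)) t • v (k + 1)), htop, zero_smul,
    add_zero, sum_range_succ' (fun k => deriv (reparamCoeff σ m k) t • v k)]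
  simp only [smul_smul, mul_comm]
  abel

theorem hasDerivAt_sum_reparamCoeff_smul {n m : ℕ} (hm : m < n) {σ : ℝ → ℝ}
    (hσ : ContDiff ℝ n σ) {γ : ℝ → F} (hγ : ContDiff ℝ n γ) (t : ℝ) :
    HasDerivAt (fun s => ∑ k ∈ range (m + 1), reparamCoeff σ m k s • iteratedDeriv k γ (σ s))
      (∑ k ∈ range (m + 2), reparamCoeff σ (m + 1) k t • iteratedDeriv k γ (σ t)) t := by
  rw [reparamCoeff.sum_succ_smul]
  refine HasDerivAt.fun_sum fun k hk => ?_
  have hk : k < n := by rw [mem_range] at hk; omega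
  have hq : HasDerivAt (reparamCoeff σ m k) (deriv (reparamCoeff σ m k) t) t :=
    ((reparamCoeff.contDiff σ hσ hm.le k).differentiable
      (by exact_mod_cast (by omega : n - m ≠ 0)) t).hasDerivAt
  have hσt : HasDerivAt σ (deriv σ t) t :=
    (hσ.differentiable (by exact_mod_cast (by omega : n ≠ 0)) t).hasDerivAt
  have hγk : HasDerivAt (iteratedDeriv k γ) (iteratedDeriv (k + 1) γ (σ t)) (σ t) := by
    rw [iteratedDeriv_succ]
    exact (hγ.differentiable_iteratedDeriv k (by exact_mod_cast hk) (σ t)).hasDerivAt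
  exact hq.smul (hγk.scomp t hσt)

theorem iteratedDeriv_comp_eq_sum_reparamCoeff {n m : ℕ} (hm : m ≤ n) {σ : ℝ → ℝ}
    (hσ : ContDiff ℝ n σ) {γ : ℝ → F} (hγ : ContDiff ℝ n γ) (t : ℝ) :
    iteratedDeriv m (γ ∘ σ) t =
      ∑ k ∈ range (m + 1), reparamCoeff σ m k t • iteratedDeriv k γ (σ t) := by
  induction m generalizing t with
  | zero => simp [reparamCoeff]
  | succ m ih =>
    rw [iteratedDeriv_succ, funext (ih (by omega))]
    exact (hasDerivAt_sum_reparamCoeff_smul (by omega) hσ hγ t).deriv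

end

theorem sum_range_add_one_eq_triangle (n : ℕ) : ∑ j ∈ range n, (j + 1) = n * (n + 1) / 2 := by
  rw [← add_zero (∑ j ∈ range n, (j + 1)), ← sum_range_succ' (fun i => i), sum_range_id,
    Nat.add_sub_cancel, Nat.mul_comm]

noncomputable def reparamMatrix (σ : ℝ → ℝ) (n : ℕ) (t : ℝ) : Matrix (Fin n) (Fin n) ℝ :=
  Matrix.of fun k j => reparamCoeff σ (j.1 + 1) (k.1 + 1) t

theorem det_reparamMatrix (σ : ℝ → ℝ) (n : ℕ) (t : ℝ) :
    (reparamMatrix σ n t).det = deriv σ t ^ (n * (n + 1) / 2) := by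
  have htri : (reparamMatrix σ n t).IsUpperTriangular := fun k j (hjk : j < k) => by
    simp [reparamMatrix, reparamCoeff.eq_zero_of_lt σ (Nat.succ_lt_succ hjk)]
  rw [Matrix.det_of_isUpperTriangular htri]
  simp only [reparamMatrix, Matrix.of_apply, reparamCoeff.self]
  rw [prod_pow_eq_pow_sum, Fin.sum_univ_eq_sum_range (fun j => j + 1),
    sum_range_add_one_eq_triangle]

theorem frameD_comp_eq_mul_reparamMatrix {n : ℕ} {σ : ℝ → ℝ} (hσ : ContDiff ℝ n σ)
    {γ : ℝ → Fin n → ℝ} (hγ : ContDiff ℝ n γ) (t : ℝ) :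
    frameD n (γ ∘ σ) t = frameD n γ (σ t) * reparamMatrix σ n t := by
  ext i j
  have hvanish : ∀ k ∈ range (n + 1), k ∉ range (j.1 + 2) →
      reparamCoeff σ (j.1 + 1) k t • iteratedDeriv k γ (σ t) = 0 := fun k _ hk => by
    rw [reparamCoeff.eq_zero_of_lt σ (by simp at hk; omega : j.1 + 1 < k), Pi.zero_apply, zero_smul]
  rw [frameD, Matrix.of_apply, iteratedDeriv_comp_eq_sum_reparamCoeff j.2 hσ hγ,
    sum_subset (range_subset_range.mpr (by omega)) hvanish,
    ← Fin.sum_univ_eq_sum_range (fun k => reparamCoeff σ (j.1 + 1) k t • iteratedDeriv k γ (σ t)),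
    Fin.sum_univ_succ]
  simp [reparamCoeff.succ_zero, Matrix.mul_apply, frameD, reparamMatrix, mul_comm]

theorem det_frame_reparam_general (n : ℕ) (σ : ℝ → ℝ) (hσ : ContDiff ℝ n σ)
    (γ : ℝ → Fin n → ℝ) (hγ : ContDiff ℝ n γ) :
    ∀ t, (frameD n (γ ∘ σ) t).det =
      (deriv σ t) ^ (n * (n + 1) / 2) * (frameD n γ (σ t)).det := fun t => by
  rw [frameD_comp_eq_mul_reparamMatrix hσ hγ, Matrix.det_mul, det_reparamMatrix, mul_comm]

theorem det_frame_reparam (n : ℕ) (σ : ℝ → ℝ) (hσ : ContDiff ℝ n σ)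
    (hσ' : ∀ t, 0 < deriv σ t) (γ : ℝ → Fin n → ℝ) (hγ : ContDiff ℝ n γ) :
    ∀ t, (frameD n (γ ∘ σ) t).det =
      (deriv σ t) ^ (n * (n + 1) / 2) * (frameD n γ (σ t)).det :=
  det_frame_reparam_general n σ hσ γ hγ
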